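/- Let W_λ be a unilateral weighted shift in ℓ²(ℕ) that is C-symmetric with respect to a conjugation C satisfying C eₙ ∈ dom(W_λ) for all n, and let W_λ = U|W_λ| be its polar decomposition. Then there exists an antilinear partial conjugation J such that U = CJ and J|W_λ| = |W_λ|J. -/

import Mathlib

open InnerProductSpace in
/-- A conjugation on a complex inner product space: an antilinear involution
satisfying `⟪Cf, Cg⟫ = ⟪g, f⟫`. -/
structure Conjugation (H : Type*) [NormedAddCommGroup H] [InnerProductSpace ℂ H] where
  toFun : H → H
  map_add' : ∀ x y, toFun (x + y) = toFun x + toFun y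
  map_smul' : ∀ (c : ℂ) (x : H), toFun (c • x) = (starRingEnd ℂ c) • toFun x
  invol : ∀ x, toFun (toFun x) = x
  inner_map : ∀ x y, (inner ℂ (toFun x) (toFun y) : ℂ) = inner ℂ y x

/-- `T` is `C`-symmetric: `T ⊆ C T* C`. -/
noncomputable def CSymmetric {H : Type*} [NormedAddCommGroup H] [InnerProductSpace ℂ H]
    [CompleteSpace H] (C : Conjugation H) (T : H →ₗ.[ℂ] H) : Prop :=
  ∀ x : T.domain, ∃ hx : C.toFun x ∈ T.adjoint.domain,
    C.toFun (T.adjoint ⟨C.toFun x, hx⟩) = T x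

/-- `T` is `C`-selfadjoint: `T = C T* C`. -/
noncomputable def CSelfAdjoint {H : Type*} [NormedAddCommGroup H] [InnerProductSpace ℂ H]
    [CompleteSpace H] (C : Conjugation H) (T : H →ₗ.[ℂ] H) : Prop :=
  CSymmetric C T ∧ ∀ y : H, C.toFun y ∈ T.adjoint.domain → y ∈ T.domain

/-- Composition of partially defined linear maps, with its natural (maximal) domain. -/
noncomputable def LinearPMap.pcomp {R E F G : Type*} [Ring R] [AddCommGroup E] [Module R E]
    [AddCommGroup F] [Module R F] [AddCommGroup G] [Module R G]
    (g : F →ₗ.[R] G) (f : E →ₗ.[R] F) : E →ₗ.[R] G :=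
  g.comp (f.domRestrict ((g.domain.comap f.toFun).map f.domain.subtype))
    (by
      rintro ⟨x, hx1, hx2⟩
      obtain ⟨y, hy, hyx⟩ := hx1
      subst hyx
      erw [LinearPMap.domRestrict_apply (y := y) rfl]; exact hy)

/-- Natural powers of a partially defined linear map, `T^(n+1) = T ∘ T^n`, with
`T^0` the identity on the whole space. -/
noncomputable def LinearPMap.ppow {R E : Type*} [Ring R] [AddCommGroup E] [Module R E]
    (T : E →ₗ.[R] E) : ℕ → E →ₗ.[R] E
  | 0 => ⟨⊤, (⊤ : Submodule R E).subtype⟩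
  | n + 1 => T.pcomp (T.ppow n)

/-- `W` is the unilateral weighted shift in `ℓ²(ℕ)` with weights `lam` (0-indexed:
`W eₙ = lam n • e_{n+1}`): it has the maximal domain
`{f : Σ |lam n * f n|² < ∞}` and acts by `(W f)(n+1) = lam n * f n`, `(W f)(0) = 0`. -/
def IsWeightedShift (lam : ℕ → ℂ) (W : lp (fun _ : ℕ => ℂ) 2 →ₗ.[ℂ] lp (fun _ : ℕ => ℂ) 2) :
    Prop :=
  (∀ f : lp (fun _ : ℕ => ℂ) 2, f ∈ W.domain ↔ Memℓp (fun n => lam n * f n) 2) ∧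
  (∀ f : W.domain, (W f : lp (fun _ : ℕ => ℂ) 2) 0 = 0 ∧
    ∀ n : ℕ, (W f : lp (fun _ : ℕ => ℂ) 2) (n + 1) = lam n * (f : lp (fun _ : ℕ => ℂ) 2) n)

/-- The canonical orthonormal basis of `ℓ²(ℕ)` (0-indexed). -/
noncomputable def e (n : ℕ) : lp (fun _ : ℕ => ℂ) 2 := lp.single 2 n 1


/-!
The modulus is diagonal: `⟪R x, R y⟫ = ⟪W x, W y⟫` gives `R² eₙ = |λₙ|² eₙ`, and positivity of `R`
selects the nonnegative root, `R eₙ = |λₙ| eₙ`. Hence `U eₙ = (λₙ / |λₙ|) eₙ₊₁`. Testing the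
`C`-symmetry of `W` on `eₙ` and on `C eₙ` yields two relations between the entries
`⟪C eₙ₊₁, eₘ⟫` and `⟪C eₙ, eₘ₊₁⟫`; together they say that `(x, y) ↦ ⟪C x, U y⟫` is symmetric,
i.e. `U* C = C U`. So `J = C U` works: `J² = U* U` is the projection onto `closure (ran R)`,
and `W* = R U*` together with `W* C = C W` on `dom W` gives `R J = R U* C = C W = C U R = J R`.
-/

open scoped InnerProductSpace InnerProduct ComplexConjugate

local notation "ℋ" => lp (fun _ : ℕ => ℂ) 2

namespace Conjugation

variable {H : Type*} [NormedAddCommGroup H] [InnerProductSpace ℂ H] (C : Conjugation H)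

lemma map_zero : C.toFun 0 = 0 := by
  simpa using C.map_smul' 0 0

lemma inner_comm (x y : H) : ⟪C.toFun x, y⟫_ℂ = ⟪C.toFun y, x⟫_ℂ := by
  conv_lhs => rw [← C.invol y]
  rw [C.inner_map]

lemma adjoint_apply_eq_of_inner_comm [CompleteSpace H] {U : H →L[ℂ] H}
    (hU : ∀ x y, ⟪C.toFun x, U y⟫_ℂ = ⟪C.toFun y, U x⟫_ℂ) (x : H) :
    (U†) (C.toFun x) = C.toFun (U x) :=
  ext_inner_right ℂ fun y => by
    rw [ContinuousLinearMap.adjoint_inner_left, hU, C.inner_comm]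

end Conjugation

namespace ContinuousLinearMap

variable {H : Type*} [NormedAddCommGroup H] [InnerProductSpace ℂ H] {M : Submodule ℂ H}
  {U : H →L[ℂ] H}

lemma inner_map_map_of_mem (hU : ∀ x ∈ M, ‖U x‖ = ‖x‖) {a b : H} (ha : a ∈ M) (hb : b ∈ M) :
    ⟪U a, U b⟫_ℂ = ⟪a, b⟫_ℂ :=
  (⟨U.toLinearMap.comp M.subtype, fun x => hU x x.2⟩ : M →ₗᵢ[ℂ] H).inner_map_map ⟨a, ha⟩ ⟨b, hb⟩

variable [M.HasOrthogonalProjection]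

lemma apply_starProjection (hU : ∀ x ∈ Mᗮ, U x = 0) (x : H) : U (M.starProjection x) = U x := by
  rw [eq_comm, ← sub_eq_zero, ← map_sub]
  exact hU _ (M.sub_starProjection_mem_orthogonal x)

lemma adjoint_apply_apply_eq_starProjection [CompleteSpace H] (hU : ∀ x ∈ M, ‖U x‖ = ‖x‖)
    (hU' : ∀ x ∈ Mᗮ, U x = 0) (x : H) : (U†) (U x) = M.starProjection x :=
  ext_inner_right ℂ fun y => by
    rw [adjoint_inner_left, ← apply_starProjection hU' x, ← apply_starProjection hU' y,
      inner_map_map_of_mem hU (M.starProjection_apply_mem x) (M.starProjection_apply_mem y),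
      M.inner_starProjection_left_eq_right,
      M.starProjection_eq_self_iff.mpr (M.starProjection_apply_mem y),
      M.inner_starProjection_left_eq_right]

end ContinuousLinearMap

namespace LinearPMap

variable {H : Type*} [NormedAddCommGroup H] [InnerProductSpace ℂ H] {R : H →ₗ.[ℂ] H}

lemma apply_mem_closure_range (x : R.domain) :
    (R x : H) ∈ (LinearMap.range R.toFun).topologicalClosure :=
  Submodule.le_topologicalClosure _ (LinearMap.mem_range_self _ x)

variable [CompleteSpace H]

lemma inner_apply_left_eq_of_isSelfAdjoint (hR : IsSelfAdjoint R) (x y : R.domain) :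
    ⟪R x, (y : H)⟫_ℂ = ⟪(x : H), R y⟫_ℂ := by
  have h := adjoint_isFormalAdjoint hR.dense_domain (T := R)
  rw [isSelfAdjoint_def.mp hR] at h
  exact h x y

lemma exists_apply_eq_of_isSelfAdjoint (hR : IsSelfAdjoint R) {v z : H}
    (h : ∀ y : R.domain, ⟪z, (y : H)⟫_ℂ = ⟪v, R y⟫_ℂ) : ∃ hv : v ∈ R.domain, R ⟨v, hv⟩ = z := by
  have hv : v ∈ R.adjoint.domain := mem_adjoint_domain_of_exists v ⟨z, h⟩
  have key : ∃ hv : v ∈ R.adjoint.domain, R.adjoint ⟨v, hv⟩ = z :=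
    ⟨hv, adjoint_apply_eq hR.dense_domain ⟨v, hv⟩ h⟩
  rwa [isSelfAdjoint_def.mp hR] at key

lemma exists_apply_eq_zero_of_mem_orthogonal (hR : IsSelfAdjoint R) {z : H}
    (hz : z ∈ (LinearMap.range R.toFun)ᗮ) : ∃ hz : z ∈ R.domain, R ⟨z, hz⟩ = 0 :=
  exists_apply_eq_of_isSelfAdjoint hR fun y => by
    rw [inner_zero_left, eq_comm]
    exact Submodule.inner_left_of_mem_orthogonal (LinearMap.mem_range_self _ y) hz

lemma apply_eq_smul_of_inner_apply_apply (hR : IsSelfAdjoint R)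
    (hpos : ∀ x : R.domain, 0 ≤ (⟪(x : H), R x⟫_ℂ).re) (x : R.domain) {a : ℝ} (ha : 0 ≤ a)
    (h : ∀ y : R.domain, ⟪R x, R y⟫_ℂ = (a ^ 2 : ℂ) * ⟪(x : H), y⟫_ℂ) :
    R x = (a : ℂ) • (x : H) := by
  rcases ha.eq_or_lt with rfl | ha
  · simpa using h x
  obtain ⟨hRx, hRRx⟩ := exists_apply_eq_of_isSelfAdjoint hR (v := R x)
    (z := (a ^ 2 : ℂ) • (x : H)) fun y => by rw [h, inner_smul_left]; simp
  -- `R² x = a² x` makes `v` an eigenvector of `R` for the eigenvalue `-a < 0`.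
  set v : R.domain := ⟨R x, hRx⟩ - (a : ℂ) • x
  have hRv : (R v : H) = -(a : ℂ) • (v : H) := by
    simp only [v, map_sub, LinearPMap.map_smul, hRRx]
    push_cast
    module
  have hv : (v : H) = 0 := by
    have := hpos v
    rw [hRv, inner_smul_right, ← Complex.ofReal_neg, Complex.re_ofReal_mul] at this
    by_contra hv
    have : 0 < (⟪(v : H), (v : H)⟫_ℂ).re := re_inner_self_pos (𝕜 := ℂ) |>.mpr hv
    nlinarith
  simpa [v, sub_eq_zero] using hv

end LinearPMap

section PolarDecomposition

variable {H : Type*} [NormedAddCommGroup H] [InnerProductSpace ℂ H] [CompleteSpace H]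

lemma CSymmetric.exists_adjoint_apply_eq {C : Conjugation H} {T : H →ₗ.[ℂ] H}
    (hT : CSymmetric C T) (x : T.domain) :
    ∃ hx : C.toFun x ∈ T.adjoint.domain, T.adjoint ⟨C.toFun x, hx⟩ = C.toFun (T x) := by
  obtain ⟨hx, h⟩ := hT x
  exact ⟨hx, by rw [← h, C.invol]⟩

structure IsPolarDecomposition (W R : H →ₗ.[ℂ] H) (U : H →L[ℂ] H) : Prop where
  isSelfAdjoint : IsSelfAdjoint R
  nonneg : ∀ x : R.domain, 0 ≤ (⟪(x : H), R x⟫_ℂ).re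
  norm_map : ∀ x ∈ (LinearMap.range R.toFun).topologicalClosure, ‖U x‖ = ‖x‖
  map_orthogonal : ∀ x ∈ (LinearMap.range R.toFun).topologicalClosureᗮ, U x = 0
  domain_eq : W.domain = R.domain
  apply_eq : ∀ (x : W.domain) (hx : (x : H) ∈ R.domain), W x = U (R ⟨x, hx⟩)

namespace IsPolarDecomposition

variable {W R : H →ₗ.[ℂ] H} {U : H →L[ℂ] H} (hP : IsPolarDecomposition W R U)
include hP

lemma mem_domain_iff {x : H} : x ∈ W.domain ↔ x ∈ R.domain := by
  rw [hP.domain_eq]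

lemma dense_domain : Dense (W.domain : Set H) :=
  hP.domain_eq ▸ hP.isSelfAdjoint.dense_domain

lemma inner_apply_apply (x y : W.domain) (hx : (x : H) ∈ R.domain) (hy : (y : H) ∈ R.domain) :
    ⟪R ⟨x, hx⟩, R ⟨y, hy⟩⟫_ℂ = ⟪W x, W y⟫_ℂ := by
  rw [hP.apply_eq x hx, hP.apply_eq y hy]
  exact (U.inner_map_map_of_mem hP.norm_map (R.apply_mem_closure_range _)
    (R.apply_mem_closure_range _)).symm

lemma exists_apply_adjoint_apply (v : W.adjoint.domain) :
    ∃ h : (U†) v ∈ R.domain, R ⟨(U†) v, h⟩ = W.adjoint v :=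
  LinearPMap.exists_apply_eq_of_isSelfAdjoint hP.isSelfAdjoint fun y => by
    have hy : (y : H) ∈ W.domain := hP.mem_domain_iff.mpr y.2
    rw [ContinuousLinearMap.adjoint_inner_left, ← hP.apply_eq ⟨y, hy⟩ y.2]
    exact LinearPMap.adjoint_isFormalAdjoint hP.dense_domain v ⟨y, hy⟩

variable {C : Conjugation H} (hCU : ∀ x, (U†) (C.toFun x) = C.toFun (U x))
include hCU

lemma conj_apply_conj_apply (x : H) :
    C.toFun (U (C.toFun (U x))) =
      (LinearMap.range R.toFun).topologicalClosure.starProjection x := by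
  rw [← hCU, C.invol, U.adjoint_apply_apply_eq_starProjection hP.norm_map hP.map_orthogonal]

variable (hsym : CSymmetric C W)
include hsym

lemma exists_apply_conj_apply (x : R.domain) :
    ∃ h : C.toFun (U x) ∈ R.domain, R ⟨C.toFun (U x), h⟩ = C.toFun (U (R x)) := by
  have hx : (x : H) ∈ W.domain := hP.mem_domain_iff.mpr x.2
  obtain ⟨hCx, hWCx⟩ := hsym.exists_adjoint_apply_eq ⟨x, hx⟩
  obtain ⟨h, hR⟩ := hP.exists_apply_adjoint_apply ⟨_, hCx⟩
  simp only [hCU] at h hR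
  exact ⟨h, by rw [hR, hWCx, hP.apply_eq ⟨x, hx⟩ x.2]⟩

lemma mem_domain_iff_conj_apply_mem (x : H) : x ∈ R.domain ↔ C.toFun (U x) ∈ R.domain := by
  refine ⟨fun hx => (hP.exists_apply_conj_apply hCU hsym ⟨x, hx⟩).1, fun hx => ?_⟩
  set M := (LinearMap.range R.toFun).topologicalClosure
  obtain ⟨h, -⟩ := LinearPMap.exists_apply_eq_zero_of_mem_orthogonal hP.isSelfAdjoint
    (z := x - M.starProjection x) (by
      rw [← Submodule.orthogonal_closure]; exact M.sub_starProjection_mem_orthogonal x)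
  have hPx : M.starProjection x ∈ R.domain := by
    rw [← hP.conj_apply_conj_apply hCU]
    exact (hP.exists_apply_conj_apply hCU hsym ⟨_, hx⟩).1
  simpa using R.domain.add_mem h hPx

end IsPolarDecomposition

end PolarDecomposition

lemma Complex.div_norm_mul_eq_of_mul_eq {a b X Y : ℂ} (hXY : b * X = a * Y)
    (hXY' : conj a * X = conj b * Y) : a / ‖a‖ * Y = b / ‖b‖ * X := by
  by_cases hab : ‖a‖ = ‖b‖
  · rw [hab, div_mul_eq_mul_div, div_mul_eq_mul_div, hXY]
  have hab' : (‖a‖ ^ 2 - ‖b‖ ^ 2 : ℂ) ≠ 0 := by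
    rw [sub_ne_zero]
    exact_mod_cast fun h => hab ((pow_left_inj₀ (norm_nonneg a) (norm_nonneg b) two_ne_zero).mp h)
  have hY : (‖a‖ ^ 2 - ‖b‖ ^ 2 : ℂ) * Y = 0 := by
    rw [← Complex.conj_mul', ← Complex.conj_mul']
    linear_combination b * hXY' - conj a * hXY
  have hX : (‖a‖ ^ 2 - ‖b‖ ^ 2 : ℂ) * X = 0 := by
    rw [← Complex.conj_mul', ← Complex.conj_mul']
    linear_combination a * hXY' - conj b * hXY
  simp [(mul_eq_zero.mp hY).resolve_left hab', (mul_eq_zero.mp hX).resolve_left hab']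

lemma inner_e_left (n : ℕ) (f : ℋ) : ⟪e n, f⟫_ℂ = f n := by
  simp [e, lp.inner_single_left]

lemma ext_e {F : Type*} [AddCommMonoid F] [Module ℂ F] [TopologicalSpace F] [T2Space F]
    ⦃f g : ℋ →L[ℂ] F⦄ (h : ∀ n, f (e n) = g (e n)) : f = g :=
  lp.ext_continuousLinearMap (by norm_num) fun n => ContinuousLinearMap.ext_ring (h n)

lemma Conjugation.inner_comm_of_inner_e_comm (C : Conjugation ℋ) {U : ℋ →L[ℂ] ℋ}
    (h : ∀ m n, ⟪C.toFun (e m), U (e n)⟫_ℂ = ⟪C.toFun (e n), U (e m)⟫_ℂ) (x y : ℋ) :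
    ⟪C.toFun x, U y⟫_ℂ = ⟪C.toFun y, U x⟫_ℂ := by
  have key (x : ℋ) (hx : ∀ n, ⟪C.toFun x, U (e n)⟫_ℂ = ⟪C.toFun (e n), U x⟫_ℂ) (y : ℋ) :
      ⟪C.toFun x, U y⟫_ℂ = ⟪C.toFun y, U x⟫_ℂ := by
    have hfg : (innerSL ℂ (C.toFun x)).comp U = innerSL ℂ (C.toFun (U x)) :=
      ext_e fun n => by simpa [C.inner_comm (U x)] using hx n
    simpa [C.inner_comm (U x)] using DFunLike.congr_fun hfg y
  exact key x (fun n => (key (e n) (fun m => (h m n).symm) x).symm) y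

namespace IsWeightedShift

variable {lam : ℕ → ℂ} {W R : ℋ →ₗ.[ℂ] ℋ} {U : ℋ →L[ℂ] ℋ} {C : Conjugation ℋ}
  (hW : IsWeightedShift lam W)
include hW

lemma e_mem_domain (n : ℕ) : e n ∈ W.domain := by
  rw [hW.1]
  convert lp.memℓp (lam n • e n) using 1
  funext k
  by_cases hk : k = n <;> simp [e, lp.single_apply, hk]

lemma apply_e (n : ℕ) : W ⟨e n, hW.e_mem_domain n⟩ = lam n • e (n + 1) := by
  ext k
  cases k with
  | zero => simp [(hW.2 _).1, e]
  | succ k => by_cases hk : k = n <;> simp [(hW.2 _).2, e, lp.single_apply, hk]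

lemma inner_e_succ_apply (x : W.domain) (n : ℕ) :
    ⟪e (n + 1), W x⟫_ℂ = lam n * ⟪e n, (x : ℋ)⟫_ℂ := by
  rw [inner_e_left, inner_e_left, (hW.2 x).2 n]

lemma dense_domain : Dense (W.domain : Set ℋ) := fun f =>
  mem_closure_of_tendsto (lp.hasSum_single (by norm_num) f) <| .of_forall fun s =>
    W.domain.sum_mem fun n _ => by
      simpa [e, ← lp.single_smul] using W.domain.smul_mem (f n) (hW.e_mem_domain n)

lemma exists_adjoint_e_succ (n : ℕ) :
    ∃ h : e (n + 1) ∈ W.adjoint.domain, W.adjoint ⟨e (n + 1), h⟩ = conj (lam n) • e n := by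
  have key (x : W.domain) : ⟪conj (lam n) • e n, (x : ℋ)⟫_ℂ = ⟪e (n + 1), W x⟫_ℂ := by
    rw [inner_smul_left, Complex.conj_conj, hW.inner_e_succ_apply]
  exact ⟨_, LinearPMap.adjoint_apply_eq hW.dense_domain
    ⟨_, LinearPMap.mem_adjoint_domain_of_exists _ ⟨_, key⟩⟩ key⟩

section CSymmetric

variable (hsym : CSymmetric C W)
include hsym

lemma lam_mul_inner_conj_e_succ (m n : ℕ) :
    lam n * ⟪C.toFun (e (n + 1)), e m⟫_ℂ = lam m * ⟪C.toFun (e n), e (m + 1)⟫_ℂ := by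
  obtain ⟨h, hWC⟩ := hsym.exists_adjoint_apply_eq ⟨e n, hW.e_mem_domain n⟩
  have := LinearPMap.adjoint_isFormalAdjoint hW.dense_domain ⟨_, h⟩ ⟨e m, hW.e_mem_domain m⟩
  rwa [hWC, hW.apply_e, hW.apply_e, C.map_smul', inner_smul_left, inner_smul_right,
    Complex.conj_conj] at this

lemma conj_lam_mul_inner_conj_e_succ (hdom : ∀ n, C.toFun (e n) ∈ W.domain) (m n : ℕ) :
    conj (lam m) * ⟪C.toFun (e (n + 1)), e m⟫_ℂ =
      conj (lam n) * ⟪C.toFun (e n), e (m + 1)⟫_ℂ := by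
  obtain ⟨h, hWC⟩ := hsym ⟨_, hdom (n + 1)⟩
  obtain ⟨h', hWe⟩ := hW.exists_adjoint_e_succ n
  have hCC : (⟨_, h⟩ : W.adjoint.domain) = ⟨e (n + 1), h'⟩ := Subtype.ext (C.invol _)
  rw [hCC, hWe, C.map_smul', Complex.conj_conj] at hWC
  have := hW.inner_e_succ_apply ⟨_, hdom (n + 1)⟩ m
  rw [← hWC, inner_smul_right] at this
  simpa only [map_mul, inner_conj_symm] using (congrArg conj this).symm

end CSymmetric

section PolarDecomposition

variable (hP : IsPolarDecomposition W R U)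
include hP

lemma e_mem_domain_abs (n : ℕ) : e n ∈ R.domain :=
  hP.mem_domain_iff.mp (hW.e_mem_domain n)

lemma abs_apply_e (n : ℕ) : R ⟨e n, hW.e_mem_domain_abs hP n⟩ = (‖lam n‖ : ℂ) • e n := by
  refine LinearPMap.apply_eq_smul_of_inner_apply_apply hP.isSelfAdjoint hP.nonneg _
    (norm_nonneg _) fun y => ?_
  rw [hP.inner_apply_apply ⟨e n, hW.e_mem_domain n⟩ ⟨y, hP.mem_domain_iff.mpr y.2⟩, hW.apply_e,
    inner_smul_left, hW.inner_e_succ_apply, ← mul_assoc, Complex.conj_mul']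

-- For `λₙ = 0` the coefficient is the junk value `0 / 0 = 0`, as it should be: `eₙ ⊥ ran R`.
lemma partialIsometry_apply_e (n : ℕ) : U (e n) = (lam n / ‖lam n‖) • e (n + 1) := by
  have hRe := hW.abs_apply_e hP n
  by_cases hn : lam n = 0
  · rw [hn, zero_div, zero_smul]
    refine hP.map_orthogonal _ ?_
    rw [Submodule.orthogonal_closure, Submodule.mem_orthogonal]
    rintro _ ⟨y, rfl⟩
    rw [show R.toFun y = R y from rfl, LinearPMap.inner_apply_left_eq_of_isSelfAdjoint
      hP.isSelfAdjoint y ⟨e n, hW.e_mem_domain_abs hP n⟩, hRe, hn]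
    simp
  · have hWe := hP.apply_eq ⟨e n, hW.e_mem_domain n⟩ (hW.e_mem_domain_abs hP n)
    rw [hW.apply_e, hRe, map_smul] at hWe
    have hn' : (‖lam n‖ : ℂ) ≠ 0 := by exact_mod_cast norm_ne_zero_iff.mpr hn
    rw [div_eq_inv_mul, ← smul_smul, hWe, smul_smul, inv_mul_cancel₀ hn', one_smul]

variable (hsym : CSymmetric C W) (hdom : ∀ n, C.toFun (e n) ∈ W.domain)
include hsym hdom

lemma inner_conj_e_partialIsometry_e_comm (m n : ℕ) :
    ⟪C.toFun (e m), U (e n)⟫_ℂ = ⟪C.toFun (e n), U (e m)⟫_ℂ := by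
  rw [hW.partialIsometry_apply_e hP, hW.partialIsometry_apply_e hP, inner_smul_right,
    inner_smul_right, C.inner_comm (e m)]
  exact (Complex.div_norm_mul_eq_of_mul_eq (hW.lam_mul_inner_conj_e_succ hsym m n)
    (hW.conj_lam_mul_inner_conj_e_succ hsym hdom m n)).symm

lemma adjoint_partialIsometry_apply_conj (x : ℋ) : (U†) (C.toFun x) = C.toFun (U x) :=
  C.adjoint_apply_eq_of_inner_comm
    (C.inner_comm_of_inner_e_comm (hW.inner_conj_e_partialIsometry_e_comm hP hsym hdom)) x

end PolarDecomposition

end IsWeightedShift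

/-- if a unilateral weighted shift `W_λ` is `C`-symmetric with
`C eₙ ∈ dom W_λ` for all `n`, and `W_λ = U |W_λ|` is its polar decomposition
(`R = |W_λ|` is the positive selfadjoint factor and `U` the partial isometry with
initial space the closure of `ran |W_λ|`), then there is an antilinear partial
conjugation `J` with `U = C J` and `J |W_λ| = |W_λ| J`. -/
theorem stmt_16 (lam : ℕ → ℂ)
    (W : lp (fun _ : ℕ => ℂ) 2 →ₗ.[ℂ] lp (fun _ : ℕ => ℂ) 2)
    (hW : IsWeightedShift lam W)
    (C : Conjugation (lp (fun _ : ℕ => ℂ) 2)) (hsym : CSymmetric C W)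
    (hdom : ∀ n : ℕ, C.toFun (e n) ∈ W.domain)
    (R : lp (fun _ : ℕ => ℂ) 2 →ₗ.[ℂ] lp (fun _ : ℕ => ℂ) 2)
    (U : lp (fun _ : ℕ => ℂ) 2 →L[ℂ] lp (fun _ : ℕ => ℂ) 2)
    -- `R` plays the role of `|W_λ|`: a positive selfadjoint operator
    (hRsa : R.adjoint = R)
    (hRpos : ∀ x : R.domain, 0 ≤ ((inner ℂ (x : lp (fun _ : ℕ => ℂ) 2) (R x) : ℂ)).re)
    -- `U` is a partial isometry with initial space `closure (ran R)`
    (hUiso : ∀ x ∈ (LinearMap.range R.toFun).topologicalClosure, ‖U x‖ = ‖x‖)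
    (hUker : ∀ x ∈ ((LinearMap.range R.toFun).topologicalClosure :
      Submodule ℂ (lp (fun _ : ℕ => ℂ) 2))ᗮ, U x = 0)
    -- `W = U R`, including equality of domains
    (hdomWR : W.domain = R.domain)
    (hWUR : ∀ (x : W.domain) (hx : (x : lp (fun _ : ℕ => ℂ) 2) ∈ R.domain),
      (W x : lp (fun _ : ℕ => ℂ) 2) = U (R ⟨x, hx⟩)) :
    ∃ J : lp (fun _ : ℕ => ℂ) 2 → lp (fun _ : ℕ => ℂ) 2,
      (∀ x y, J (x + y) = J x + J y) ∧
      (∀ (c : ℂ) x, J (c • x) = (starRingEnd ℂ c) • J x) ∧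
      (∀ f ∈ (LinearMap.range R.toFun).topologicalClosure,
        ∀ g ∈ (LinearMap.range R.toFun).topologicalClosure,
          (inner ℂ (J f) (J g) : ℂ) = inner ℂ g f) ∧
      (∀ x ∈ ((LinearMap.range R.toFun).topologicalClosure :
        Submodule ℂ (lp (fun _ : ℕ => ℂ) 2))ᗮ, J x = 0) ∧
      (∀ x ∈ (LinearMap.range R.toFun).topologicalClosure, J (J x) = x) ∧
      (∀ x ∈ ((LinearMap.range R.toFun).topologicalClosure :
        Submodule ℂ (lp (fun _ : ℕ => ℂ) 2))ᗮ, J (J x) = 0) ∧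
      (∀ x, U x = C.toFun (J x)) ∧
      (∀ x, x ∈ R.domain ↔ J x ∈ R.domain) ∧
      (∀ (x : R.domain) (hx : J x ∈ R.domain), J (R x) = R ⟨J x, hx⟩) := by
  have hP : IsPolarDecomposition W R U := ⟨hRsa, hRpos, hUiso, hUker, hdomWR, hWUR⟩
  have hCU := hW.adjoint_partialIsometry_apply_conj hP hsym hdom
  refine ⟨fun x => C.toFun (U x), fun x y => ?_, fun c x => ?_, fun f hf g hg => ?_,
    fun x hx => ?_, fun x hx => ?_, fun x hx => ?_, fun x => (C.invol _).symm,
    hP.mem_domain_iff_conj_apply_mem hCU hsym, fun x hx => ?_⟩ <;> dsimp only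
  · rw [map_add, C.map_add']
  · rw [map_smul, C.map_smul']
  · rw [C.inner_map, U.inner_map_map_of_mem hUiso hg hf]
  · rw [hUker x hx, C.map_zero]
  · rw [hP.conj_apply_conj_apply hCU, Submodule.starProjection_eq_self_iff.mpr hx]
  · rw [hUker x hx, C.map_zero, map_zero, C.map_zero]
  · exact (hP.exists_apply_conj_apply hCU hsym x).2.symm
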